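/- Let C^a : ℝ^{1+n} → ℝ^{(1+n)×(1+n)} be a compactly supported smooth antisymmetric matrix field (C^a_{jk} = −C^a_{kj}) such that Σ_{j,k} ∫ C^a_{jk}(x) ∂ⱼu₁(x) ∂_k u₂(x) dx = 0 for all harmonic functions u₁, u₂ on ℝ^{1+n}. Then Σⱼ ∂ⱼ C^a_{jk} = 0 for every k = 0,…,n. -/

import Mathlib

/-!
If `a ⊥ b` and `|a| = |b|`, the functions `e^{b·x} cos (a·x - θ)` are harmonic (real parts of the
exponentials `exp (i ζ·x)` with `ζ = a - i b`, `ζ·ζ = 0`). Pairing the gradient of such a function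
with that of `e^{-b·x} cos (a·x - φ)` through the antisymmetric matrix `C(x)` leaves only
`(a · C(x) b) sin (2 a·x - θ - φ)`, so the hypothesis makes all Fourier coefficients of
`x ↦ a · C(x) b` at frequency `2a` vanish, for every `b ⊥ a` after rescaling `b`. As `a · C a = 0`,
`b` may be replaced by the coordinate vector `e_k`: the Fourier coefficients of `x ↦ (v · C(x))_k`
at frequency `v` vanish. By integration by parts they are those of the divergence
`∑ⱼ ∂ⱼ C_{jk}` up to the factor `i`, and Fourier inversion gives the theorem.
-/

open MeasureTheory

/-- Partial derivative in the `j`-th coordinate direction. -/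
noncomputable def pd {m : ℕ} {E : Type*} [NormedAddCommGroup E] [NormedSpace ℝ E]
    (j : Fin m) (f : (Fin m → ℝ) → E) (x : Fin m → ℝ) : E :=
  fderiv ℝ f x (Pi.single j 1)

/-- A function is harmonic on all of `ℝ^m`. -/
def IsHarm {m : ℕ} (u : (Fin m → ℝ) → ℝ) : Prop :=
  ContDiff ℝ 2 u ∧ ∀ x, ∑ j, pd j (pd j u) x = 0

open Real Matrix

lemma HasCompactSupport.matrix_elem {X ι κ R : Type*} [TopologicalSpace X] [Zero R]
    {A : X → Matrix ι κ R} (hA : HasCompactSupport A) (i : ι) (j : κ) :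
    HasCompactSupport fun x => A x i j :=
  hA.comp_left (g := fun M : Matrix ι κ R => M i j) rfl

section SkewForm

lemma sum_sum_mul_mul_eq_dotProduct_mulVec {ι κ R : Type*} [Fintype ι] [Fintype κ]
    [CommSemiring R] (M : Matrix ι κ R) (p : ι → R) (q : κ → R) :
    ∑ j, ∑ k, M j k * p j * q k = p ⬝ᵥ M *ᵥ q := by
  simp only [dotProduct, mulVec, Finset.mul_sum]
  exact Finset.sum_congr rfl fun _ _ => Finset.sum_congr rfl fun _ _ => by ring

variable {ι R : Type*} [Fintype ι] [CommRing R] {M : Matrix ι ι R}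

lemma dotProduct_mulVec_swap_of_transpose_eq_neg (hM : Mᵀ = -M) (a b : ι → R) :
    b ⬝ᵥ M *ᵥ a = -(a ⬝ᵥ M *ᵥ b) := by
  rw [dotProduct_mulVec, dotProduct_comm, ← mulVec_transpose, hM, neg_mulVec, dotProduct_neg]

lemma dotProduct_mulVec_self_of_transpose_eq_neg [IsAddTorsionFree R] (hM : Mᵀ = -M) (a : ι → R) :
    a ⬝ᵥ M *ᵥ a = 0 :=
  self_eq_neg.mp (dotProduct_mulVec_swap_of_transpose_eq_neg hM a a)

end SkewForm

section FourierUniqueness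

open scoped RealInnerProductSpace FourierTransform

variable {V : Type*} [NormedAddCommGroup V] [InnerProductSpace ℝ V] [MeasurableSpace V]
  [BorelSpace V] [FiniteDimensional ℝ V]

lemma eq_zero_of_integral_mul_cos_inner_eq_zero {g : V → ℝ} (hc : Continuous g)
    (hi : Integrable g) (h : ∀ w ψ, ∫ x, g x * cos (⟪x, w⟫ - ψ) = 0) : g = 0 := by
  have hfc : Continuous fun x => (g x : ℂ) := Complex.continuous_ofReal.comp hc
  have hfi : Integrable fun x => (g x : ℂ) := hi.ofReal
  have hF : 𝓕 (fun x => (g x : ℂ)) = 0 := by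
    ext w
    have hint := (Real.fourierIntegral_convergent_iff w).mpr hfi
    have hchar : ∀ x, 𝐞 (-⟪x, w⟫) • (g x : ℂ)
        = Complex.exp (↑⟪x, (-(2 * π)) • w⟫ * Complex.I) * g x := fun x => by
      rw [Circle.smul_def, Real.fourierChar_apply, inner_smul_right, smul_eq_mul]; ring_nf
    apply Complex.ext
    · calc (𝓕 (fun x => (g x : ℂ)) w).re
          = ∫ x, RCLike.re (𝐞 (-⟪x, w⟫) • (g x : ℂ)) := (integral_re hint).symm
        _ = ∫ x, g x * cos (⟪x, (-(2 * π)) • w⟫ - 0) := by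
          congr 1; ext x
          rw [hchar, RCLike.re_to_complex, Complex.re_mul_ofReal, Complex.exp_ofReal_mul_I_re,
            sub_zero, mul_comm]
        _ = 0 := h _ 0
    · calc (𝓕 (fun x => (g x : ℂ)) w).im
          = ∫ x, RCLike.im (𝐞 (-⟪x, w⟫) • (g x : ℂ)) := (integral_im hint).symm
        _ = ∫ x, g x * cos (⟪x, (-(2 * π)) • w⟫ - π / 2) := by
          congr 1; ext x
          rw [hchar, RCLike.im_to_complex, Complex.im_mul_ofReal, Complex.exp_ofReal_mul_I_im,
            cos_sub_pi_div_two, mul_comm]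
        _ = 0 := h _ (π / 2)
  have hinv := hfc.fourierInv_fourier_eq hfi (by rw [hF]; exact integrable_zero _ _ _)
  ext x
  simpa [hF, Real.fourierInv_eq] using (congrFun hinv x).symm

end FourierUniqueness

lemma eq_zero_of_integral_mul_cos_dotProduct_eq_zero {ι : Type*} [Fintype ι] {g : (ι → ℝ) → ℝ}
    (hc : Continuous g) (hi : Integrable g) (h : ∀ v ψ, ∫ x, g x * cos (v ⬝ᵥ x - ψ) = 0) :
    g = 0 := by
  have hpres := EuclideanSpace.volume_preserving_symm_measurableEquiv_toLp ι
  have hE : (g ∘ WithLp.ofLp : EuclideanSpace ℝ ι → ℝ) = 0 := by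
    refine eq_zero_of_integral_mul_cos_inner_eq_zero (hc.comp (PiLp.continuous_ofLp 2 _))
      ((hpres.integrable_comp_emb (MeasurableEquiv.measurableEmbedding _)).mpr hi) fun w ψ => ?_
    simpa [EuclideanSpace.inner_eq_star_dotProduct] using
      (hpres.integral_comp' (fun y => g y * cos (w.ofLp ⬝ᵥ y - ψ))).trans (h w.ofLp ψ)
  ext y
  exact congrFun hE (WithLp.toLp 2 y)

section

variable {m : ℕ}

noncomputable def dotProductCLM (a : Fin m → ℝ) : (Fin m → ℝ) →L[ℝ] ℝ :=
  LinearMap.toContinuousLinearMap (dotProductBilin ℝ ℝ a)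

@[simp]
lemma dotProductCLM_apply (a x : Fin m → ℝ) : dotProductCLM a x = a ⬝ᵥ x := rfl

lemma pd_eq_of_hasFDerivAt {E : Type*} [NormedAddCommGroup E] [NormedSpace ℝ E]
    {f : (Fin m → ℝ) → E} {f' : (Fin m → ℝ) →L[ℝ] E} {x : Fin m → ℝ}
    (h : HasFDerivAt f f' x) (j : Fin m) : pd j f x = f' (Pi.single j 1) := by
  rw [pd, h.fderiv]

lemma continuous_pd {g : (Fin m → ℝ) → ℝ} (hg : ContDiff ℝ 1 g) (j : Fin m) :
    Continuous (pd j g) :=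
  (hg.continuous_fderiv one_ne_zero).clm_apply continuous_const

lemma integral_pd_mul_cos {g : (Fin m → ℝ) → ℝ} (hg : ContDiff ℝ 1 g) (hgc : HasCompactSupport g)
    (j : Fin m) (v : Fin m → ℝ) (ψ : ℝ) :
    ∫ x, pd j g x * cos (v ⬝ᵥ x - ψ) = v j * ∫ x, g x * cos (v ⬝ᵥ x - (ψ + π / 2)) := by
  set w : (Fin m → ℝ) → ℝ := fun x => cos (v ⬝ᵥ x - ψ)
  have hw : ∀ x, HasFDerivAt w (-sin (v ⬝ᵥ x - ψ) • dotProductCLM v) x := fun x =>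
    (hasDerivAt_cos _).comp_hasFDerivAt x ((dotProductCLM v).hasFDerivAt.sub_const ψ)
  have hw' : ∀ x, fderiv ℝ w x (Pi.single j 1) = -sin (v ⬝ᵥ x - ψ) * v j := fun x => by
    simp [(hw x).fderiv]
  have hwc : Continuous w := by fun_prop
  have hgd : Differentiable ℝ g := hg.differentiable one_ne_zero
  have hw'g : Integrable fun x => fderiv ℝ w x (Pi.single j 1) * g x := by
    simp only [hw']
    exact (by fun_prop : Continuous _).integrable_of_hasCompactSupport hgc.mul_left
  have ibp := integral_mul_fderiv_eq_neg_fderiv_mul_of_integrable (μ := volume)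
    (f := w) (g := g) (v := Pi.single j 1) hw'g
    ((hwc.mul (continuous_pd hg j)).integrable_of_hasCompactSupport
      (hgc.fderiv_apply ℝ _).mul_left)
    ((hwc.mul hg.continuous).integrable_of_hasCompactSupport hgc.mul_left)
    (fun x _ => (hw x).differentiableAt) (fun x _ => hgd x)
  simp only [hw'] at ibp
  calc ∫ x, pd j g x * cos (v ⬝ᵥ x - ψ) = ∫ x, w x * fderiv ℝ g x (Pi.single j 1) := by
        simp only [pd, w, mul_comm]
    _ = v j * ∫ x, g x * sin (v ⬝ᵥ x - ψ) := by
        rw [ibp, ← integral_const_mul, ← integral_neg]; congr 1; ext x; ring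
    _ = v j * ∫ x, g x * cos (v ⬝ᵥ x - (ψ + π / 2)) := by
        simp only [← sub_sub, cos_sub_pi_div_two]

noncomputable def harmExp (a b : Fin m → ℝ) (θ : ℝ) (x : Fin m → ℝ) : ℝ :=
  exp (b ⬝ᵥ x) * cos (a ⬝ᵥ x - θ)

lemma contDiff_harmExp (a b : Fin m → ℝ) (θ : ℝ) : ContDiff ℝ ⊤ (harmExp a b θ) := by
  unfold harmExp
  simp_rw [← dotProductCLM_apply]
  fun_prop

lemma harmExp_sub_pi (a b : Fin m → ℝ) (θ : ℝ) : harmExp a b (θ - π) = -harmExp a b θ := by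
  ext x
  simp only [harmExp, Pi.neg_apply, sub_sub_eq_add_sub, add_sub_right_comm, cos_add_pi, mul_neg]

lemma hasFDerivAt_harmExp (a b : Fin m → ℝ) (θ : ℝ) (x : Fin m → ℝ) :
    HasFDerivAt (harmExp a b θ)
      (harmExp a b θ x • dotProductCLM b + harmExp a b (θ - π / 2) x • dotProductCLM a) x := by
  have hexp := (hasDerivAt_exp (b ⬝ᵥ x)).comp_hasFDerivAt x (dotProductCLM b).hasFDerivAt
  have hcos := (hasDerivAt_cos (a ⬝ᵥ x - θ)).comp_hasFDerivAt x
    ((dotProductCLM a).hasFDerivAt.sub_const θ)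
  refine (hexp.mul hcos).congr_fderiv ?_
  ext v
  simp [harmExp, sub_sub_eq_add_sub, add_sub_right_comm _ (π / 2), cos_add_pi_div_two]
  ring

lemma pd_harmExp (a b : Fin m → ℝ) (θ : ℝ) (j : Fin m) :
    pd j (harmExp a b θ) = b j • harmExp a b θ + a j • harmExp a b (θ - π / 2) := by
  ext x
  simp [pd_eq_of_hasFDerivAt (hasFDerivAt_harmExp a b θ x), mul_comm]

lemma isHarm_harmExp {a b : Fin m → ℝ} (hab : a ⬝ᵥ b = 0) (hnorm : a ⬝ᵥ a = b ⬝ᵥ b) (θ : ℝ) :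
    IsHarm (harmExp a b θ) := by
  refine ⟨(contDiff_harmExp a b θ).of_le le_top, fun x => ?_⟩
  have hd : ∀ θ', HasFDerivAt (harmExp a b θ') _ x := fun θ' => hasFDerivAt_harmExp a b θ' x
  have hpd2 : ∀ j, pd j (pd j (harmExp a b θ)) x =
      (b j * b j - a j * a j) * harmExp a b θ x + 2 * (a j * b j) * harmExp a b (θ - π / 2) x := by
    intro j
    rw [pd_harmExp, pd_eq_of_hasFDerivAt (((hd θ).const_smul (b j)).add ((hd _).const_smul (a j)))]
    simp [sub_sub, add_halves, harmExp_sub_pi]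
    ring
  simp only [hpd2, Finset.sum_add_distrib, ← Finset.sum_mul, Finset.sum_sub_distrib]
  simp only [dotProduct] at hab hnorm
  simp [hab, hnorm, ← Finset.mul_sum]

lemma harmExp_sub_pi_div_two (a b : Fin m → ℝ) (θ : ℝ) (x : Fin m → ℝ) :
    harmExp a b (θ - π / 2) x = -(exp (b ⬝ᵥ x) * sin (a ⬝ᵥ x - θ)) := by
  rw [harmExp, sub_sub_eq_add_sub, add_sub_right_comm, cos_add_pi_div_two, mul_neg]

lemma sum_sum_mul_pd_harmExp_mul_pd_harmExp {M : Matrix (Fin m) (Fin m) ℝ} (hM : Mᵀ = -M)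
    (a b : Fin m → ℝ) (θ φ : ℝ) (x : Fin m → ℝ) :
    ∑ j, ∑ k, M j k * pd j (harmExp a b θ) x * pd k (harmExp a (-b) φ) x
      = (a ⬝ᵥ M *ᵥ b) * sin (2 * (a ⬝ᵥ x) - θ - φ) := by
  have grad : ∀ (b : Fin m → ℝ) θ, (fun j => pd j (harmExp a b θ) x)
      = harmExp a b θ x • b + harmExp a b (θ - π / 2) x • a := by
    intro b θ; ext j; simp [pd_harmExp, mul_comm]
  have hexp : exp (b ⬝ᵥ x) * exp (-b ⬝ᵥ x) = 1 := by
    rw [← exp_add, neg_dotProduct, add_neg_cancel, exp_zero]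
  rw [sum_sum_mul_mul_eq_dotProduct_mulVec M (fun j => pd j _ x) (fun k => pd k _ x),
    grad, grad]
  simp only [mulVec_add, mulVec_smul, mulVec_neg, dotProduct_add, add_dotProduct, smul_dotProduct,
    dotProduct_smul, dotProduct_neg, dotProduct_mulVec_self_of_transpose_eq_neg hM,
    dotProduct_mulVec_swap_of_transpose_eq_neg hM a b, harmExp_sub_pi_div_two, smul_eq_mul]
  simp only [harmExp]
  rw [show 2 * (a ⬝ᵥ x) - θ - φ = (a ⬝ᵥ x - θ) + (a ⬝ᵥ x - φ) by ring, sin_add]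
  linear_combination (a ⬝ᵥ M *ᵥ b) *
    (sin (a ⬝ᵥ x - θ) * cos (a ⬝ᵥ x - φ) + cos (a ⬝ᵥ x - θ) * sin (a ⬝ᵥ x - φ)) * hexp

lemma continuous_pd_harmExp (a b : Fin m → ℝ) (θ : ℝ) (j : Fin m) :
    Continuous (pd j (harmExp a b θ)) := by
  rw [pd_harmExp]
  exact ((contDiff_harmExp a b θ).continuous.const_smul _).add
    ((contDiff_harmExp a b _).continuous.const_smul _)

section MatrixField

variable {C : (Fin m → ℝ) → Matrix (Fin m) (Fin m) ℝ}

lemma integral_dotProduct_mulVec_mul_cos_eq_zero_of_norm_eq (hC : Continuous C)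
    (hCc : HasCompactSupport C) (hM : ∀ x, (C x)ᵀ = -C x)
    (h : ∀ u₁ u₂ : (Fin m → ℝ) → ℝ, IsHarm u₁ → IsHarm u₂ →
      ∑ j, ∑ k, ∫ x, C x j k * pd j u₁ x * pd k u₂ x = 0)
    {a b : Fin m → ℝ} (hab : a ⬝ᵥ b = 0) (hnorm : a ⬝ᵥ a = b ⬝ᵥ b) (ψ : ℝ) :
    ∫ x, (a ⬝ᵥ C x *ᵥ b) * cos (2 * (a ⬝ᵥ x) - ψ) = 0 := by
  have hu₁ := isHarm_harmExp hab hnorm ψ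
  have hu₂ := isHarm_harmExp (a := a) (b := -b) (by simp [hab]) (by simp [hnorm]) (-(π / 2))
  have hint : ∀ j k, Integrable fun x =>
      C x j k * pd j (harmExp a b ψ) x * pd k (harmExp a (-b) (-(π / 2))) x := fun j k =>
    (((hC.matrix_elem j k).mul (continuous_pd_harmExp a b ψ j)).mul
      (continuous_pd_harmExp a (-b) _ k)).integrable_of_hasCompactSupport
      (hCc.matrix_elem j k).mul_right.mul_right
  have H := h _ _ hu₁ hu₂
  rw [Finset.sum_congr rfl fun j _ => (integral_finsetSum _ fun k _ => hint j k).symm,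
    ← integral_finsetSum _ fun j _ => integrable_finsetSum _ fun k _ => hint j k] at H
  simpa [sum_sum_mul_pd_harmExp_mul_pd_harmExp (hM _), sub_neg_eq_add, sin_add_pi_div_two] using H

lemma integral_dotProduct_mulVec_mul_cos_eq_zero (hC : Continuous C)
    (hCc : HasCompactSupport C) (hM : ∀ x, (C x)ᵀ = -C x)
    (h : ∀ u₁ u₂ : (Fin m → ℝ) → ℝ, IsHarm u₁ → IsHarm u₂ →
      ∑ j, ∑ k, ∫ x, C x j k * pd j u₁ x * pd k u₂ x = 0)
    {a b : Fin m → ℝ} (hab : a ⬝ᵥ b = 0) (ψ : ℝ) :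
    ∫ x, (a ⬝ᵥ C x *ᵥ b) * cos (2 * (a ⬝ᵥ x) - ψ) = 0 := by
  rcases eq_or_ne a 0 with rfl | ha
  · simp
  rcases eq_or_ne b 0 with rfl | hb
  · simp
  have hpos : ∀ c : Fin m → ℝ, c ≠ 0 → 0 < c ⬝ᵥ c := fun c hc =>
    (Finset.sum_nonneg fun i _ => mul_self_nonneg (c i)).lt_of_ne
      (Ne.symm (dotProduct_self_eq_zero.not.mpr hc))
  set r := √(a ⬝ᵥ a / b ⬝ᵥ b)
  have hr : 0 < r := sqrt_pos.mpr (div_pos (hpos a ha) (hpos b hb))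
  have hnorm : a ⬝ᵥ a = r • b ⬝ᵥ r • b := by
    rw [smul_dotProduct, dotProduct_smul, smul_eq_mul, smul_eq_mul, ← mul_assoc, ← sq,
      sq_sqrt (div_pos (hpos a ha) (hpos b hb)).le, div_mul_cancel₀ _ (hpos b hb).ne']
  have H := integral_dotProduct_mulVec_mul_cos_eq_zero_of_norm_eq hC hCc hM h
    (by rw [dotProduct_smul, hab, smul_zero]) hnorm ψ
  simp only [mulVec_smul, dotProduct_smul, smul_eq_mul, mul_assoc, integral_const_mul] at H
  exact (mul_eq_zero.mp H).resolve_left hr.ne'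

lemma integral_vecMul_mul_cos_eq_zero (hC : Continuous C)
    (hCc : HasCompactSupport C) (hM : ∀ x, (C x)ᵀ = -C x)
    (h : ∀ u₁ u₂ : (Fin m → ℝ) → ℝ, IsHarm u₁ → IsHarm u₂ →
      ∑ j, ∑ k, ∫ x, C x j k * pd j u₁ x * pd k u₂ x = 0)
    (v : Fin m → ℝ) (k : Fin m) (ψ : ℝ) :
    ∫ x, (v ᵥ* C x) k * cos (v ⬝ᵥ x - ψ) = 0 := by
  obtain ⟨a, rfl⟩ : ∃ a, v = (2 : ℝ) • a := ⟨(2 : ℝ)⁻¹ • v, by simp⟩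
  set b := Pi.single k 1 - (a k / a ⬝ᵥ a) • a
  have hab : a ⬝ᵥ b = 0 := by
    rcases eq_or_ne (a ⬝ᵥ a) 0 with ha | ha
    · simp [dotProduct_self_eq_zero.mp ha]
    · simp [b, dotProduct_sub, dotProduct_smul, div_mul_cancel₀ _ ha]
  have hcol : ∀ x, (a ᵥ* C x) k = a ⬝ᵥ C x *ᵥ b := fun x => by
    simp [b, mulVec_sub, dotProduct_sub, mulVec_smul, dotProduct_smul,
      dotProduct_mulVec_self_of_transpose_eq_neg (hM x)]
    rfl
  have H := integral_dotProduct_mulVec_mul_cos_eq_zero hC hCc hM h hab ψ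
  simp only [smul_vecMul, smul_dotProduct, Pi.smul_apply, smul_eq_mul, hcol, mul_assoc,
    integral_const_mul, H, mul_zero]

end MatrixField

lemma integral_divergence_mul_cos {C : (Fin m → ℝ) → Fin m → Fin m → ℝ} (hC : ContDiff ℝ 1 C)
    (hCc : HasCompactSupport C)
    (k : Fin m) (v : Fin m → ℝ) (ψ : ℝ) :
    ∫ x, (∑ j, pd j (fun y => C y j k) x) * cos (v ⬝ᵥ x - ψ)
      = ∫ x, (v ᵥ* C x) k * cos (v ⬝ᵥ x - (ψ + π / 2)) := by
  have hentry : ∀ j, ContDiff ℝ 1 fun y => C y j k := fun j =>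
    (contDiff_apply_apply ℝ ℝ j k).comp hC
  have hint : ∀ j, Integrable fun x => pd j (fun y => C y j k) x * cos (v ⬝ᵥ x - ψ) := fun j =>
    ((continuous_pd (hentry j) j).mul (by fun_prop)).integrable_of_hasCompactSupport
      ((hCc.matrix_elem j k).fderiv_apply ℝ _).mul_right
  have hint' : ∀ j, Integrable fun x => C x j k * cos (v ⬝ᵥ x - (ψ + π / 2)) := fun j =>
    ((hC.continuous.matrix_elem j k).mul (by fun_prop)).integrable_of_hasCompactSupport
      (hCc.matrix_elem j k).mul_right
  calc ∫ x, (∑ j, pd j (fun y => C y j k) x) * cos (v ⬝ᵥ x - ψ)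
      = ∑ j, ∫ x, pd j (fun y => C y j k) x * cos (v ⬝ᵥ x - ψ) := by
        simp only [Finset.sum_mul]; exact integral_finsetSum _ fun j _ => hint j
    _ = ∑ j, ∫ x, v j * (C x j k * cos (v ⬝ᵥ x - (ψ + π / 2))) :=
        Finset.sum_congr rfl fun j _ => by
          rw [integral_pd_mul_cos (hentry j) (hCc.matrix_elem j k), integral_const_mul]
    _ = ∫ x, (v ᵥ* C x) k * cos (v ⬝ᵥ x - (ψ + π / 2)) := by
        rw [← integral_finsetSum _ fun j _ => (hint' j).const_mul (v j)]
        simp only [vecMul, dotProduct, Finset.sum_mul, mul_assoc]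

end

theorem stmt12 (n : ℕ)
    (Ca : (Fin (n + 1) → ℝ) → Fin (n + 1) → Fin (n + 1) → ℝ)
    (hsm : ContDiff ℝ (⊤ : ℕ∞) Ca) (hcs : HasCompactSupport Ca)
    (hanti : ∀ x j k, Ca x j k = -Ca x k j)
    (h : ∀ u₁ u₂ : (Fin (n + 1) → ℝ) → ℝ, IsHarm u₁ → IsHarm u₂ →
      ∑ j, ∑ k, ∫ x, Ca x j k * pd j u₁ x * pd k u₂ x = 0) :
    ∀ k, ∀ x, ∑ j, pd j (fun y => Ca y j k) x = 0 := by
  intro k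
  have hC : ContDiff ℝ 1 Ca := hsm.of_le (by exact_mod_cast le_top)
  have hM : ∀ x, (Ca x)ᵀ = -Ca x := fun x => by ext i j; exact hanti x j i
  have hpd : ∀ j, Continuous (pd j fun y => Ca y j k) := fun j =>
    continuous_pd ((contDiff_apply_apply ℝ ℝ j k).comp hC) j
  refine congrFun (eq_zero_of_integral_mul_cos_dotProduct_eq_zero
    (continuous_finsetSum _ fun j _ => hpd j)
    (integrable_finsetSum _ fun j _ => (hpd j).integrable_of_hasCompactSupport
      ((hcs.matrix_elem j k).fderiv_apply ℝ _))
    fun v ψ => ?_)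
  rw [integral_divergence_mul_cos hC hcs k v ψ]
  exact integral_vecMul_mul_cos_eq_zero hC.continuous hcs hM h v k _
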